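/- Let $x \in L_1(0,1)$, $E = \bigcup_{j\ge 0}(2^{-2j-1},2^{-2j})$, and $f_1 = \sum_{n=0}^{\infty}(-1)^{n+1}\mu(2^{-n-1};x) h_{n,1}$ with $h_{n,1} = \chi_{(0,2^{-n-1})} - \chi_{(2^{-n-1},2^{-n})}$. Then $(Tf_1)\chi_E \ge \frac{1}{2\log 2}\chi_E \cdot \sigma_{1/2} C^*\mu(x)$ almost everywhere, where $T$ is the martingale transform $Tf = \sum_{m\text{ even}}(\mathbb{E}_m f - \mathbb{E}_{m-1} f)$, $(C^*y)(t) = \int_t^1 \frac{y(s)}{s}ds$, and $(\sigma_{1/2}y)(t) = y(2t)\chi_{[0,1]}(2t)$. -/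

import Mathlib

/-!
Write `aₙ = μ(2^{-n-1}; x)` and `I_k = (2^{-k-1}, 2^{-k})`, so that
`f₁ = ∑ (-1)^{n+1} aₙ h_{n,1}`. Since `μ(·; x)` is decreasing,
`aₙ 2^{-n} ≤ 4 ∫_{I_{n+1}} μ(s; x) ds`, hence `∑ aₙ 2^{-n} ≤ 4 ‖x‖₁` and the series converges in
`L¹`. For `n ≥ m`, `h_{n,1}` has mean zero on every dyadic interval of length `2^{-m}`, while for
`n < m` it is `𝓕_m`-measurable up to null sets; so `𝔼_m f₁` is the `m`-th partial sum and the even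
increments `𝔼_m - 𝔼_{m-1}` of `T` pick out the odd terms. On `I_{2j}`, where `h_{n,1} = 1` for
`n < 2j`, this gives `Tf₁ = ∑_{i<j} a_{2i+1}`.

On the other side, `2t > 2^{-2j}` for `t ∈ I_{2j}`, and on each block `I_k` we have
`∫_{I_k} μ(s; x) / s ds ≤ a_k log 2`, so
`C^*μ(x)(2t) ≤ log 2 ∑_{k<2j} a_k ≤ 2 log 2 ∑_{i<j} a_{2i+1}`, the last step by `a_{2i} ≤ a_{2i+1}`.
-/

open MeasureTheory Set

noncomputable section

def m01 : Measure ℝ := volume.restrict (Ioo (0:ℝ) 1)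

def rearr (x : ℝ → ℝ) (t : ℝ) : ℝ :=
  sInf {s : ℝ | 0 ≤ s ∧ m01 {u | s < |x u|} ≤ ENNReal.ofReal t}

def dil (s : ℝ) (y : ℝ → ℝ) (t : ℝ) : ℝ :=
  if t / s ∈ Icc (0:ℝ) 1 then y (t / s) else 0

def In (n : ℕ) : Set ℝ := Ioo (((2:ℝ)^(n+1))⁻¹) (((2:ℝ)^n)⁻¹)

def Jn (n : ℕ) : Set ℝ := Ioo 0 (((2:ℝ)^n)⁻¹)

def haarH (n : ℕ) : ℝ → ℝ := fun t => indicator (Jn (n+1)) 1 t - indicator (In n) 1 t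

def Eset : Set ℝ := ⋃ j : ℕ, In (2*j)

def hardyC (y : ℝ → ℝ) (t : ℝ) : ℝ := (1/t) * ∫ s in Ioo (0:ℝ) t, y s

def hardyCstar (y : ℝ → ℝ) (t : ℝ) : ℝ := ∫ s in Ioo t 1, y s / s

def calderon (y : ℝ → ℝ) (t : ℝ) : ℝ := hardyC y t + hardyCstar y t

def dyadicSA (m : ℕ) : MeasurableSpace ℝ :=
  MeasurableSpace.generateFrom
    {A | ∃ j : ℕ, 1 ≤ j ∧ j ≤ 2^m ∧ A = Ioo ((j-1 : ℝ)/2^m) ((j:ℝ)/2^m)}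

def condE (m : ℕ) (f : ℝ → ℝ) : ℝ → ℝ := m01[f | dyadicSA m]

def condEprev (m : ℕ) (f : ℝ → ℝ) : ℝ → ℝ := if m = 0 then 0 else condE (m-1) f

def Tmart (f : ℝ → ℝ) : ℝ → ℝ :=
  fun t => ∑' m : ℕ, if Even m then condE m f t - condEprev m f t else 0

def Teps (f : ℝ → ℝ) : ℝ → ℝ :=
  fun t => ∑' m : ℕ, (-1:ℝ)^m * (condE m f t - condEprev m f t)

open Filter Function
open scoped ENNReal

lemma inv_two_pow_pos (n : ℕ) : (0:ℝ) < ((2:ℝ)^n)⁻¹ := by positivity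

lemma inv_two_pow_le_one (n : ℕ) : ((2:ℝ)^n)⁻¹ ≤ 1 :=
  inv_le_one_of_one_le₀ (one_le_pow₀ one_le_two)

lemma inv_two_pow_anti {m n : ℕ} (h : m ≤ n) : ((2:ℝ)^n)⁻¹ ≤ ((2:ℝ)^m)⁻¹ :=
  inv_pow_le_inv_pow_of_le one_le_two h

lemma inv_two_pow_eq_two_mul (n : ℕ) : ((2:ℝ)^n)⁻¹ = 2 * ((2:ℝ)^(n+1))⁻¹ := by
  rw [pow_succ, mul_inv]; field_simp

lemma natCast_two_pow_sub_div {m n : ℕ} (h : n ≤ m) :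
    ((2^(m-n) : ℕ) : ℝ) / 2^m = ((2:ℝ)^n)⁻¹ := by
  rw [Nat.cast_pow, Nat.cast_ofNat, pow_sub₀ _ two_ne_zero h, div_eq_mul_inv, mul_comm,
    ← mul_assoc, inv_mul_cancel₀ (by positivity), one_mul]

instance : IsFiniteMeasure m01 := isFiniteMeasure_restrict.2 measure_Ioo_lt_top.ne

instance : NullSingletonClass m01 := by unfold m01; infer_instance

lemma rearr_nonneg (x : ℝ → ℝ) (t : ℝ) : 0 ≤ rearr x t :=
  Real.sInf_nonneg fun _ hs => hs.1

section Rearrangement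

variable {x : ℝ → ℝ}

lemma rearr_set_nonempty (hx : Integrable x m01) {t : ℝ} (ht : 0 < t) :
    {s : ℝ | 0 ≤ s ∧ m01 {u | s < |x u|} ≤ ENNReal.ofReal t}.Nonempty := by
  set I := ∫ u, |x u| ∂m01
  have hI0 : 0 ≤ I := integral_nonneg fun u => abs_nonneg (x u)
  have hs : 0 < I / t + 1 := by positivity
  refine ⟨I / t + 1, hs.le, ?_⟩
  have markov := mul_meas_ge_le_integral_of_nonneg (f := fun u => |x u|)
    (Eventually.of_forall fun u => abs_nonneg (x u)) hx.abs (I / t + 1)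
  have hI : I ≤ (I / t + 1) * t := by rw [add_mul, div_mul_cancel₀ _ ht.ne']; linarith
  calc m01 {u | I / t + 1 < |x u|} ≤ m01 {u | I / t + 1 ≤ |x u|} :=
        measure_mono (ofPred_subset_ofPred.2 fun _ => le_of_lt)
    _ = ENNReal.ofReal (m01.real {u | I / t + 1 ≤ |x u|}) := (ofReal_measureReal).symm
    _ ≤ ENNReal.ofReal t := ENNReal.ofReal_le_ofReal (le_of_mul_le_mul_left (markov.trans hI) hs)

-- Nonemptiness matters here: `sInf ∅ = 0` would break monotonicity.
lemma rearr_antitoneOn (hx : Integrable x m01) : AntitoneOn (rearr x) (Ioi 0) := by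
  intro t₁ ht₁ t₂ _ h
  refine csInf_le_csInf ⟨0, fun s hs => hs.1⟩ (rearr_set_nonempty hx ht₁) ?_
  exact fun s hs => ⟨hs.1, hs.2.trans (ENNReal.ofReal_le_ofReal h)⟩

lemma m01_lt_rearr_le {s : ℝ} (hs : 0 ≤ s) :
    m01 {t | s < rearr x t} ≤ m01 {u | s < |x u|} := by
  set d := m01 {u | s < |x u|}
  -- if `d ≤ t` then `s` belongs to the set whose infimum is `μ(t; x)`
  have hsub : {t | s < rearr x t} ∩ Ioo 0 1 ⊆ Ioo 0 d.toReal := by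
    rintro t ⟨ht, ht01⟩
    refine ⟨ht01.1, lt_of_not_ge fun hdt => (lt_irrefl s) (ht.trans_le ?_)⟩
    refine csInf_le ⟨0, fun s' hs' => hs'.1⟩ ⟨hs, ?_⟩
    calc d = ENNReal.ofReal d.toReal := (ENNReal.ofReal_toReal (measure_lt_top _ _).ne).symm
      _ ≤ ENNReal.ofReal t := ENNReal.ofReal_le_ofReal hdt
  calc m01 {t | s < rearr x t} = volume ({t | s < rearr x t} ∩ Ioo 0 1) :=
        Measure.restrict_apply' measurableSet_Ioo
    _ ≤ volume (Ioo 0 d.toReal) := measure_mono hsub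
    _ ≤ d := by rw [Real.volume_Ioo, sub_zero, ENNReal.ofReal_toReal (measure_lt_top _ _).ne]

lemma aemeasurable_rearr (hx : Integrable x m01) : AEMeasurable (rearr x) m01 :=
  aemeasurable_restrict_of_antitoneOn measurableSet_Ioo
    ((rearr_antitoneOn hx).mono fun _ ht => ht.1)

lemma lintegral_rearr_le (hx : Integrable x m01) :
    ∫⁻ t, ENNReal.ofReal (rearr x t) ∂m01 ≤ ∫⁻ u, ‖x u‖ₑ ∂m01 := by
  have habs : AEMeasurable (fun u => |x u|) m01 := hx.aestronglyMeasurable.aemeasurable.abs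
  simp_rw [← ofReal_norm, Real.norm_eq_abs]
  rw [lintegral_eq_lintegral_meas_lt m01 (Eventually.of_forall (rearr_nonneg x))
      (aemeasurable_rearr hx),
    lintegral_eq_lintegral_meas_lt m01 (Eventually.of_forall fun u => abs_nonneg (x u)) habs]
  exact setLIntegral_mono' measurableSet_Ioi fun s hs => m01_lt_rearr_le (le_of_lt hs)

end Rearrangement

section Haar

lemma m01_eq_volume {s : Set ℝ} (h : s ⊆ Ioo 0 1) : m01 s = volume s :=
  Measure.restrict_eq_self _ h

lemma Jn_subset_Jn {m n : ℕ} (h : m ≤ n) : Jn n ⊆ Jn m :=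
  Ioo_subset_Ioo_right (inv_two_pow_anti h)

lemma In_subset_Jn (n : ℕ) : In n ⊆ Jn n :=
  Ioo_subset_Ioo_left (inv_two_pow_pos _).le

lemma measurableSet_Jn (n : ℕ) : MeasurableSet (Jn n) := measurableSet_Ioo

lemma measurableSet_In (n : ℕ) : MeasurableSet (In n) := measurableSet_Ioo

lemma m01_Jn (n : ℕ) : m01 (Jn n) = ENNReal.ofReal ((2:ℝ)^n)⁻¹ := by
  rw [m01_eq_volume ((Jn_subset_Jn n.zero_le).trans (by simp [Jn])), Jn, Real.volume_Ioo,
    sub_zero]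

lemma m01_In (n : ℕ) : m01 (In n) = ENNReal.ofReal ((2:ℝ)^(n+1))⁻¹ := by
  rw [m01_eq_volume ((In_subset_Jn n).trans ((Jn_subset_Jn n.zero_le).trans (by simp [Jn]))),
    In, Real.volume_Ioo, inv_two_pow_eq_two_mul n]
  ring_nf

lemma haarH_eq_zero_of_le {n : ℕ} {u : ℝ} (h : ((2:ℝ)^n)⁻¹ ≤ u) : haarH n u = 0 := by
  have hJ : u ∉ Jn (n+1) := fun hu => (hu.2.trans_le (inv_two_pow_anti n.le_succ)).not_ge h
  have hI : u ∉ In n := fun hu => hu.2.not_ge h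
  simp [haarH, hJ, hI]

lemma haarH_of_mem_In {n k : ℕ} {u : ℝ} (hu : u ∈ In k) :
    haarH n u = if n < k then 1 else if n = k then -1 else 0 := by
  rcases lt_trichotomy n k with hnk | rfl | hnk
  · have hJ : u ∈ Jn (n+1) :=
      ⟨(inv_two_pow_pos _).trans hu.1, hu.2.trans_le (inv_two_pow_anti hnk)⟩
    have hI : u ∉ In n := fun h => (hu.2.trans_le (inv_two_pow_anti hnk)).not_gt h.1
    simp [haarH, hJ, hI, hnk]
  · have hJ : u ∉ Jn (n+1) := fun h => h.2.not_gt hu.1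
    simp [haarH, hJ, hu]
  · rw [if_neg (by omega), if_neg (by omega)]
    exact haarH_eq_zero_of_le ((inv_two_pow_anti hnk).trans hu.1.le)

lemma abs_haarH_le (n : ℕ) (u : ℝ) : |haarH n u| ≤ (Jn n).indicator 1 u := by
  have hJ : u ∈ Jn (n+1) → u ∈ Jn n := fun h => Jn_subset_Jn n.le_succ h
  have hI : u ∈ In n → u ∈ Jn n := fun h => In_subset_Jn n h
  simp only [haarH, Set.indicator, Pi.one_apply]
  split_ifs <;> norm_num <;> tauto

lemma measurable_haarH (n : ℕ) : Measurable (haarH n) :=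
  (measurable_const.indicator (measurableSet_Jn _)).sub
    (measurable_const.indicator (measurableSet_In n))

lemma setIntegral_haarH_eq_zero {n : ℕ} {s : Set ℝ} (hsub : Jn n ⊆ s) :
    ∫ u in s, haarH n u ∂m01 = 0 := by
  have hJ : Jn (n+1) ⊆ s := (Jn_subset_Jn n.le_succ).trans hsub
  have hI : In n ⊆ s := (In_subset_Jn n).trans hsub
  have hmeasure (A : Set ℝ) (hA : A ⊆ s) (hmA : MeasurableSet A) :
      ∫ u in s, A.indicator 1 u ∂m01 = m01.real A := by
    rw [integral_indicator_one hmA, measureReal_restrict_apply hmA, inter_eq_left.2 hA]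
  have hint (A : Set ℝ) (hmA : MeasurableSet A) : IntegrableOn (A.indicator (1 : ℝ → ℝ)) s m01 :=
    ((integrable_const (1:ℝ)).indicator hmA).integrableOn
  change ∫ u in s, ((Jn (n+1)).indicator 1 u - (In n).indicator 1 u) ∂m01 = 0
  rw [integral_sub (hint _ (measurableSet_Jn _)) (hint _ (measurableSet_In n)),
    hmeasure _ hJ (measurableSet_Jn _), hmeasure _ hI (measurableSet_In n), measureReal_def,
    measureReal_def, m01_Jn, m01_In, sub_self]

lemma integral_haarH (n : ℕ) : ∫ u, haarH n u ∂m01 = 0 := by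
  simpa using setIntegral_haarH_eq_zero (s := univ) (subset_univ (Jn n))

lemma integrable_haarH (n : ℕ) : Integrable (haarH n) m01 :=
  ((integrable_const 1).indicator (measurableSet_Jn _)).sub
    ((integrable_const 1).indicator (measurableSet_In n))

lemma pairwise_disjoint_In : Pairwise (Disjoint on In) := by
  refine (pairwise_disjoint_on In).2 fun a b hab => Set.disjoint_left.2 fun u ha hb => ?_
  exact (hb.2.trans_le (inv_two_pow_anti hab)).not_gt ha.1

lemma m01_Jn_eq_four_mul (n : ℕ) : m01 (Jn n) = 4 * m01 (In (n+1)) := by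
  rw [m01_Jn, m01_In, ← ENNReal.ofReal_ofNat 4, ← ENNReal.ofReal_mul (by norm_num)]
  congr 1
  field_simp
  ring

end Haar

theorem integrable_tsum_of_tsum_lintegral_ne_top {α ι : Type*} [MeasurableSpace α] [Countable ι]
    {μ : Measure α} {F : ι → α → ℝ} (hF : ∀ i, AEMeasurable (F i) μ)
    (h : ∑' i, ∫⁻ a, ‖F i a‖ₑ ∂μ ≠ ∞) : Integrable (fun a => ∑' i, F i a) μ := by
  refine ⟨(AEMeasurable.tsum hF).aestronglyMeasurable, ?_⟩
  calc ∫⁻ a, ‖∑' i, F i a‖ₑ ∂μ ≤ ∫⁻ a, ∑' i, ‖F i a‖ₑ ∂μ :=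
        lintegral_mono fun _ => enorm_tsum_le_tsum_enorm
    _ = ∑' i, ∫⁻ a, ‖F i a‖ₑ ∂μ := lintegral_tsum fun i => (hF i).enorm
    _ < ∞ := h.lt_top

section Series

variable (x : ℝ → ℝ)

def f1Term (n : ℕ) (u : ℝ) : ℝ := (-1:ℝ)^(n+1) * rearr x ((2:ℝ)^(n+1))⁻¹ * haarH n u

def f1 : ℝ → ℝ := fun u => ∑' n, f1Term x n u

def f1Partial (m : ℕ) : ℝ → ℝ := fun u => ∑ n ∈ Finset.range m, f1Term x n u

lemma measurable_f1Term (n : ℕ) : Measurable (f1Term x n) :=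
  (measurable_haarH n).const_mul _

lemma enorm_f1Term_le (n : ℕ) (u : ℝ) :
    ‖f1Term x n u‖ₑ ≤ (Jn n).indicator (fun _ => ENNReal.ofReal (rearr x ((2:ℝ)^(n+1))⁻¹)) u := by
  have h := abs_haarH_le n u
  rw [← ofReal_norm, Real.norm_eq_abs, f1Term, abs_mul, abs_mul, abs_pow, abs_neg, abs_one,
    one_pow, one_mul, abs_of_nonneg (rearr_nonneg _ _)]
  by_cases hu : u ∈ Jn n
  · rw [indicator_of_mem hu] at h ⊢
    exact ENNReal.ofReal_le_ofReal (mul_le_of_le_one_right (rearr_nonneg _ _) h)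
  · rw [indicator_of_notMem hu] at h ⊢
    simp [abs_nonpos_iff.1 h]

variable {x}

lemma lintegral_enorm_f1Term_le (hx : Integrable x m01) (n : ℕ) :
    ∫⁻ u, ‖f1Term x n u‖ₑ ∂m01 ≤ 4 * ∫⁻ t in In (n+1), ENNReal.ofReal (rearr x t) ∂m01 := by
  calc ∫⁻ u, ‖f1Term x n u‖ₑ ∂m01
      ≤ ∫⁻ u, (Jn n).indicator (fun _ => ENNReal.ofReal (rearr x ((2:ℝ)^(n+1))⁻¹)) u ∂m01 :=
        lintegral_mono (enorm_f1Term_le x n)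
    _ = 4 * ∫⁻ t in In (n+1), ENNReal.ofReal (rearr x ((2:ℝ)^(n+1))⁻¹) ∂m01 := by
        rw [lintegral_indicator_const (measurableSet_Jn n), setLIntegral_const,
          m01_Jn_eq_four_mul]
        ring
    _ ≤ 4 * ∫⁻ t in In (n+1), ENNReal.ofReal (rearr x t) ∂m01 := by
        gcongr 4 * ?_
        refine setLIntegral_mono' (measurableSet_In _) fun t ht => ENNReal.ofReal_le_ofReal ?_
        exact rearr_antitoneOn hx ((inv_two_pow_pos _).trans ht.1) (inv_two_pow_pos _) ht.2.le

lemma tsum_lintegral_enorm_f1Term_ne_top (hx : Integrable x m01) :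
    ∑' n, ∫⁻ u, ‖f1Term x n u‖ₑ ∂m01 ≠ ∞ := by
  have hfin : 4 * ∫⁻ u, ‖x u‖ₑ ∂m01 ≠ ∞ := ENNReal.mul_ne_top (by norm_num) hx.2.ne
  refine ne_top_of_le_ne_top hfin ?_
  calc ∑' n, ∫⁻ u, ‖f1Term x n u‖ₑ ∂m01
      ≤ ∑' n, 4 * ∫⁻ t in In (n+1), ENNReal.ofReal (rearr x t) ∂m01 :=
        ENNReal.tsum_le_tsum (lintegral_enorm_f1Term_le hx)
    _ = 4 * ∫⁻ t in ⋃ n, In (n+1), ENNReal.ofReal (rearr x t) ∂m01 := by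
        rw [ENNReal.tsum_mul_left, lintegral_iUnion (fun n => measurableSet_In _)
          (pairwise_disjoint_In.comp_of_injective Nat.succ_injective)]
    _ ≤ 4 * ∫⁻ u, ‖x u‖ₑ ∂m01 := by
        gcongr 4 * ?_
        exact (setLIntegral_le_lintegral _ _).trans (lintegral_rearr_le hx)

lemma integrable_f1 (hx : Integrable x m01) : Integrable (f1 x) m01 :=
  integrable_tsum_of_tsum_lintegral_ne_top (fun n => (measurable_f1Term x n).aemeasurable)
    (tsum_lintegral_enorm_f1Term_ne_top hx)

lemma setIntegral_f1 (hx : Integrable x m01) (s : Set ℝ) :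
    ∫ u in s, f1 x u ∂m01 = ∑' n, ∫ u in s, f1Term x n u ∂m01 :=
  integral_tsum (fun n => (measurable_f1Term x n).aestronglyMeasurable)
    (ne_top_of_le_ne_top (tsum_lintegral_enorm_f1Term_ne_top hx)
      (ENNReal.tsum_le_tsum fun _ => setLIntegral_le_lintegral _ _))

end Series

theorem setIntegral_eq_of_isPiSystem {α : Type*} {m m₀ : MeasurableSpace α} {μ : Measure[m₀] α}
    {C : Set (Set α)} (hgen : m = MeasurableSpace.generateFrom C) (hC : IsPiSystem C)
    (hm : m ≤ m₀) {f g : α → ℝ} (hf : Integrable f μ) (hg : Integrable g μ)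
    (basic : ∀ s ∈ C, ∫ a in s, f a ∂μ = ∫ a in s, g a ∂μ)
    (h_univ : ∫ a, f a ∂μ = ∫ a, g a ∂μ) {s : Set α} (hs : MeasurableSet[m] s) :
    ∫ a in s, f a ∂μ = ∫ a in s, g a ∂μ := by
  induction s, hs using MeasurableSpace.induction_on_inter hgen hC with
  | empty => simp
  | basic s hs => exact basic s hs
  | compl s hs ih =>
    have hf' := integral_add_compl (hm s hs) hf
    have hg' := integral_add_compl (hm s hs) hg
    linarith
  | iUnion F hdisj hF ih =>
    rw [integral_iUnion (fun i => hm _ (hF i)) hdisj hf.integrableOn,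
      integral_iUnion (fun i => hm _ (hF i)) hdisj hg.integrableOn]
    exact tsum_congr ih

section Dyadic

lemma dyadicSA_le (m : ℕ) : dyadicSA m ≤ (inferInstance : MeasurableSpace ℝ) :=
  MeasurableSpace.generateFrom_le fun _ ⟨_, _, _, h⟩ => h ▸ measurableSet_Ioo

lemma isPiSystem_dyadic (m : ℕ) : IsPiSystem
    {A : Set ℝ | ∃ j : ℕ, 1 ≤ j ∧ j ≤ 2^m ∧ A = Ioo ((j-1 : ℝ)/2^m) ((j:ℝ)/2^m)} := by
  rintro _ ⟨j, hj, hjm, rfl⟩ _ ⟨k, -, -, rfl⟩ ⟨u, hu, hu'⟩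
  have hpos : (0:ℝ) < 2^m := by positivity
  have hjk := (div_lt_div_iff_of_pos_right hpos).1 (hu.1.trans hu'.2)
  have hkj := (div_lt_div_iff_of_pos_right hpos).1 (hu'.1.trans hu.2)
  obtain rfl : j = k := by
    have : j < k + 1 := by exact_mod_cast (by linarith : (j:ℝ) < k + 1)
    have : k < j + 1 := by exact_mod_cast (by linarith : (k:ℝ) < j + 1)
    omega
  exact ⟨j, hj, hjm, inter_self _⟩

lemma aestronglyMeasurable_indicator_Ico_dyadic {m a b : ℕ} (hab : a ≤ b) (hb : b ≤ 2^m) :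
    AEStronglyMeasurable[dyadicSA m]
      ((Ico ((a:ℝ)/2^m) ((b:ℝ)/2^m)).indicator (1 : ℝ → ℝ)) m01 := by
  -- half-open intervals concatenate exactly; the open generators agree with them a.e.
  induction b, hab using Nat.le_induction with
  | base => simpa using aestronglyMeasurable_const
  | succ b hab ih =>
    have hgen : MeasurableSet[dyadicSA m] (Ioo ((b:ℝ)/2^m) (((b+1 : ℕ):ℝ)/2^m)) :=
      MeasurableSpace.measurableSet_generateFrom
        ⟨b+1, by omega, hb, by rw [Nat.cast_succ, add_sub_cancel_right]⟩
    have hdiv {k l : ℕ} (h : k ≤ l) : (k:ℝ)/2^m ≤ (l:ℝ)/2^m := by gcongr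
    rw [← Ico_union_Ico_eq_Ico (hdiv hab) (hdiv b.le_succ),
      indicator_union_of_disjoint (Ico_disjoint_Ico_same)]
    exact (ih (by omega)).add ((stronglyMeasurable_one.indicator hgen).aestronglyMeasurable.congr
      (indicator_ae_eq_of_ae_eq_set Ioo_ae_eq_Ico))

lemma aestronglyMeasurable_indicator_Ioo_dyadic {m a b : ℕ} (hab : a ≤ b) (hb : b ≤ 2^m) :
    AEStronglyMeasurable[dyadicSA m]
      ((Ioo ((a:ℝ)/2^m) ((b:ℝ)/2^m)).indicator (1 : ℝ → ℝ)) m01 :=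
  (aestronglyMeasurable_indicator_Ico_dyadic hab hb).congr
    (indicator_ae_eq_of_ae_eq_set Ioo_ae_eq_Ico.symm)

lemma aestronglyMeasurable_haarH {m n : ℕ} (h : n < m) :
    AEStronglyMeasurable[dyadicSA m] (haarH n) m01 := by
  have hJ : Jn (n+1) = Ioo (((0:ℕ):ℝ)/2^m) (((2^(m-(n+1)) : ℕ):ℝ)/2^m) := by
    rw [Nat.cast_zero, zero_div, natCast_two_pow_sub_div h]; rfl
  have hI : In n = Ioo (((2^(m-(n+1)) : ℕ):ℝ)/2^m) (((2^(m-n) : ℕ):ℝ)/2^m) := by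
    rw [natCast_two_pow_sub_div h, natCast_two_pow_sub_div h.le]; rfl
  have hpow (k : ℕ) : 2^(m-k) ≤ 2^m := Nat.pow_le_pow_right two_pos (Nat.sub_le m k)
  change AEStronglyMeasurable[dyadicSA m]
    (fun u => (Jn (n+1)).indicator 1 u - (In n).indicator 1 u) m01
  rw [hJ, hI]
  exact (aestronglyMeasurable_indicator_Ioo_dyadic (Nat.zero_le _) (hpow _)).sub
    (aestronglyMeasurable_indicator_Ioo_dyadic (Nat.pow_le_pow_right two_pos (by omega)) (hpow _))

lemma setIntegral_haarH_dyadic_eq_zero {m n j : ℕ} (hmn : m ≤ n) (hj : 1 ≤ j) :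
    ∫ u in Ioo ((j-1 : ℝ)/2^m) ((j:ℝ)/2^m), haarH n u ∂m01 = 0 := by
  obtain rfl | hj := hj.eq_or_lt
  · refine setIntegral_haarH_eq_zero ((Jn_subset_Jn hmn).trans_eq ?_)
    simp [Jn]
  · refine setIntegral_eq_zero_of_forall_eq_zero fun u hu => haarH_eq_zero_of_le ?_
    have hj1 : (1:ℝ) ≤ j - 1 := by
      have : (2:ℝ) ≤ j := by exact_mod_cast hj
      linarith
    calc ((2:ℝ)^n)⁻¹ ≤ ((2:ℝ)^m)⁻¹ := inv_two_pow_anti hmn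
      _ ≤ (j - 1 : ℝ)/2^m := by rw [inv_eq_one_div]; gcongr
      _ ≤ u := hu.1.le

end Dyadic

section ConditionalExpectation

lemma integral_f1Term (x : ℝ → ℝ) (n : ℕ) : ∫ u, f1Term x n u ∂m01 = 0 := by
  simp only [f1Term, integral_const_mul, integral_haarH, mul_zero]

lemma setIntegral_f1Term_dyadic_eq_zero {x : ℝ → ℝ} {m n j : ℕ} (hmn : m ≤ n) (hj : 1 ≤ j) :
    ∫ u in Ioo ((j-1 : ℝ)/2^m) ((j:ℝ)/2^m), f1Term x n u ∂m01 = 0 := by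
  simp only [f1Term, integral_const_mul, setIntegral_haarH_dyadic_eq_zero hmn hj, mul_zero]

lemma integrable_f1Term (x : ℝ → ℝ) (n : ℕ) : Integrable (f1Term x n) m01 :=
  (integrable_haarH n).const_mul _

lemma aestronglyMeasurable_f1Term (x : ℝ → ℝ) {m n : ℕ} (h : n < m) :
    AEStronglyMeasurable[dyadicSA m] (f1Term x n) m01 :=
  (aestronglyMeasurable_haarH h).const_mul _

lemma integrable_f1Partial (x : ℝ → ℝ) (m : ℕ) : Integrable (f1Partial x m) m01 :=
  integrable_finsetSum _ fun n _ => integrable_f1Term x n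

lemma aestronglyMeasurable_f1Partial (x : ℝ → ℝ) {m k : ℕ} (hk : k ≤ m) :
    AEStronglyMeasurable[dyadicSA m] (f1Partial x k) m01 := by
  induction k with
  | zero => unfold f1Partial; simpa using aestronglyMeasurable_const
  | succ k ih =>
    unfold f1Partial
    simp only [Finset.sum_range_succ]
    exact (ih (by omega)).add (aestronglyMeasurable_f1Term x hk)

lemma integral_f1Partial (x : ℝ → ℝ) (m : ℕ) : ∫ u, f1Partial x m u ∂m01 = 0 := by
  unfold f1Partial
  rw [integral_finsetSum _ fun n _ => integrable_f1Term x n]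
  simp [integral_f1Term]

lemma integral_f1 {x : ℝ → ℝ} (hx : Integrable x m01) : ∫ u, f1 x u ∂m01 = 0 := by
  rw [← setIntegral_univ, setIntegral_f1 hx]
  simp [integral_f1Term]

lemma setIntegral_f1_dyadic {x : ℝ → ℝ} {m j : ℕ} (hx : Integrable x m01) (hj : 1 ≤ j) :
    ∫ u in Ioo ((j-1 : ℝ)/2^m) ((j:ℝ)/2^m), f1 x u ∂m01
      = ∫ u in Ioo ((j-1 : ℝ)/2^m) ((j:ℝ)/2^m), f1Partial x m u ∂m01 := by
  unfold f1Partial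
  rw [setIntegral_f1 hx, integral_finsetSum _ fun n _ => (integrable_f1Term x n).integrableOn]
  exact tsum_eq_sum fun n hn => setIntegral_f1Term_dyadic_eq_zero (by simpa using hn) hj

lemma condE_f1_ae_eq {x : ℝ → ℝ} (hx : Integrable x m01) (m : ℕ) :
    condE m (f1 x) =ᵐ[m01] f1Partial x m :=
  (ae_eq_condExp_of_forall_setIntegral_eq (dyadicSA_le m) (integrable_f1 hx)
    (fun _ _ _ => (integrable_f1Partial x m).integrableOn)
    (fun _ hs _ => setIntegral_eq_of_isPiSystem rfl (isPiSystem_dyadic m) (dyadicSA_le m)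
      (integrable_f1Partial x m) (integrable_f1 hx)
      (fun _ ⟨_, hj, _, hs⟩ => hs ▸ (setIntegral_f1_dyadic hx hj).symm)
      ((integral_f1Partial x m).trans (integral_f1 hx).symm) hs)
    (aestronglyMeasurable_f1Partial x le_rfl)).symm

end ConditionalExpectation

lemma sum_range_ite_even_eq (b : ℕ → ℝ) (j : ℕ) :
    ∑ m ∈ Finset.range (2*j+1), (if Even m ∧ 1 ≤ m ∧ m ≤ 2*j then b m else 0)
      = ∑ i ∈ Finset.range j, b (2*i+2) := by
  rw [← Finset.sum_filter]
  have hfilter : (Finset.range (2*j+1)).filter (fun m => Even m ∧ 1 ≤ m ∧ m ≤ 2*j)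
      = (Finset.range j).image (fun i => 2*i+2) := by
    ext m
    simp only [Finset.mem_filter, Finset.mem_range, Finset.mem_image, Nat.even_iff]
    constructor
    · rintro ⟨-, hm, hm1, hmj⟩
      exact ⟨m/2 - 1, by omega, by omega⟩
    · rintro ⟨i, hi, rfl⟩
      omega
  rw [hfilter, Finset.sum_image fun a _ b _ h => by omega]

lemma condE_sub_condEprev_eq {f : ℝ → ℝ} {F : ℕ → ℝ} {t : ℝ}
    (h : ∀ m, condE m f t = ∑ n ∈ Finset.range m, F n) (m : ℕ) :
    condE m f t - condEprev m f t = if m = 0 then 0 else F (m-1) := by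
  rcases m with _ | m
  · simp [condEprev, h]
  · simp [condEprev, h, Finset.sum_range_succ]

lemma Tmart_f1_eq {x : ℝ → ℝ} {t : ℝ} {j : ℕ}
    (hcond : ∀ m, condE m (f1 x) t = f1Partial x m t) (htj : t ∈ In (2*j)) :
    Tmart (f1 x) t = ∑ i ∈ Finset.range j, rearr x ((2:ℝ)^(2*i+2))⁻¹ := by
  have hterm (m : ℕ) : (if Even m then condE m (f1 x) t - condEprev m (f1 x) t else 0)
      = if Even m ∧ 1 ≤ m ∧ m ≤ 2*j then rearr x ((2:ℝ)^m)⁻¹ else 0 := by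
    rw [condE_sub_condEprev_eq (F := fun n => f1Term x n t) hcond m]
    rcases m with _ | m
    · simp
    · by_cases he : Even (m+1)
      · have hm : m ≠ 2*j := by rintro rfl; exact Nat.not_even_two_mul_add_one j he
        rw [if_pos he, if_neg m.succ_ne_zero, Nat.add_sub_cancel, f1Term, haarH_of_mem_In htj,
          he.neg_one_pow, one_mul, if_neg hm]
        by_cases hmj : m < 2*j
        · rw [if_pos hmj, if_pos ⟨he, by omega, by omega⟩, mul_one]
        · rw [if_neg hmj, if_neg (by omega), mul_zero]
      · rw [if_neg he, if_neg fun h => he h.1]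
  rw [Tmart, tsum_congr hterm]
  refine (tsum_eq_sum fun m hm => ?_).trans
    (sum_range_ite_even_eq (fun m => rearr x ((2:ℝ)^m)⁻¹) j)
  exact if_neg fun h => hm (Finset.mem_range.2 (by omega))

lemma sum_range_two_mul_le (b : ℕ → ℝ) (hb : ∀ i, b (2*i) ≤ b (2*i+1)) (j : ℕ) :
    ∑ i ∈ Finset.range (2*j), b i ≤ 2 * ∑ i ∈ Finset.range j, b (2*i+1) := by
  induction j with
  | zero => simp
  | succ j ih =>
    rw [Nat.mul_succ, Finset.sum_range_succ, Finset.sum_range_succ, Finset.sum_range_succ]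
    linarith [hb j]

section DualHardy

variable {y : ℝ → ℝ}

lemma intervalIntegrable_div_self (hy : AntitoneOn y (Ioi 0)) (hy0 : 0 ≤ y) {a b : ℝ}
    (ha : 0 < a) (hab : a ≤ b) : IntervalIntegrable (fun s => y s / s) volume a b := by
  refine AntitoneOn.intervalIntegrable fun s hs s' hs' hss' => ?_
  rw [uIcc_of_le hab] at hs hs'
  exact div_le_div₀ (hy0 s) (hy (ha.trans_le hs.1) (ha.trans_le hs'.1) hss') (ha.trans_le hs.1) hss'

lemma integral_div_self_le_mul_log_two (hy : AntitoneOn y (Ioi 0)) (hy0 : 0 ≤ y) {a : ℝ}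
    (ha : 0 < a) : ∫ s in a..2*a, y s / s ≤ y a * Real.log 2 := by
  have h2a : a ≤ 2*a := by linarith
  calc ∫ s in a..2*a, y s / s ≤ ∫ s in a..2*a, y a / s :=
        intervalIntegral.integral_mono_on h2a (intervalIntegrable_div_self hy hy0 ha h2a)
          (intervalIntegrable_div_self antitoneOn_const (fun _ => hy0 a) ha h2a)
          fun s hs => div_le_div_of_nonneg_right (hy ha (ha.trans_le hs.1) hs.1)
            (ha.trans_le hs.1).le
    _ = y a * Real.log 2 := by
        simp_rw [div_eq_mul_inv]
        rw [intervalIntegral.integral_const_mul, integral_inv_of_pos ha (by linarith),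
          mul_div_cancel_right₀ _ ha.ne']

lemma integral_inv_two_pow_le (hy : AntitoneOn y (Ioi 0)) (hy0 : 0 ≤ y) (k : ℕ) :
    ∫ s in ((2:ℝ)^k)⁻¹..1, y s / s ≤ Real.log 2 * ∑ i ∈ Finset.range k, y ((2:ℝ)^(i+1))⁻¹ := by
  induction k with
  | zero => simp
  | succ k ih =>
    have h := integral_div_self_le_mul_log_two hy hy0 (inv_two_pow_pos (k+1))
    rw [← inv_two_pow_eq_two_mul] at h
    rw [← intervalIntegral.integral_add_adjacent_intervals
      (intervalIntegrable_div_self hy hy0 (inv_two_pow_pos _) (inv_two_pow_anti k.le_succ))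
      (intervalIntegrable_div_self hy hy0 (inv_two_pow_pos _) (inv_two_pow_le_one k)),
      Finset.sum_range_succ, mul_add]
    linarith

lemma hardyCstar_le_integral (hy : AntitoneOn y (Ioi 0)) (hy0 : 0 ≤ y) {c t : ℝ} (hc : 0 < c)
    (hct : c ≤ t) (ht : t ≤ 1) : hardyCstar y t ≤ ∫ s in c..1, y s / s := by
  rw [hardyCstar, ← integral_Ioc_eq_integral_Ioo, ← intervalIntegral.integral_of_le ht]
  refine intervalIntegral.integral_mono_interval hct ht le_rfl ?_
    (intervalIntegrable_div_self hy hy0 hc (hct.trans ht))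
  filter_upwards [ae_restrict_mem measurableSet_Ioc] with s hs
  exact div_nonneg (hy0 s) (hc.trans hs.1).le

end DualHardy

lemma dil_hardyCstar_rearr_le {x : ℝ → ℝ} (hx : Integrable x m01) {t : ℝ} {j : ℕ}
    (htj : t ∈ In (2*j)) :
    dil (1/2) (hardyCstar (rearr x)) t
      ≤ 2 * Real.log 2 * ∑ i ∈ Finset.range j, rearr x ((2:ℝ)^(2*i+2))⁻¹ := by
  have h2t : t / (1/2) = 2 * t := by ring
  by_cases ht1 : 2 * t ≤ 1
  · have hlow : ((2:ℝ)^(2*j))⁻¹ ≤ 2 * t := by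
      rw [inv_two_pow_eq_two_mul]; linarith [htj.1]
    rw [dil, if_pos (h2t ▸ ⟨by linarith [inv_two_pow_pos (2*j)], ht1⟩), h2t]
    calc hardyCstar (rearr x) (2 * t)
        ≤ ∫ s in ((2:ℝ)^(2*j))⁻¹..1, rearr x s / s :=
          hardyCstar_le_integral (rearr_antitoneOn hx) (rearr_nonneg x) (inv_two_pow_pos _)
            hlow ht1
      _ ≤ Real.log 2 * ∑ i ∈ Finset.range (2*j), rearr x ((2:ℝ)^(i+1))⁻¹ :=
          integral_inv_two_pow_le (rearr_antitoneOn hx) (rearr_nonneg x) (2*j)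
      _ ≤ Real.log 2 * (2 * ∑ i ∈ Finset.range j, rearr x ((2:ℝ)^(2*i+2))⁻¹) := by
          gcongr
          exact sum_range_two_mul_le (fun i => rearr x ((2:ℝ)^(i+1))⁻¹)
            (fun i => rearr_antitoneOn hx (inv_two_pow_pos _) (inv_two_pow_pos _)
              (inv_two_pow_anti (by omega))) j
      _ = _ := by ring
  · rw [dil, if_neg (h2t ▸ fun h => ht1 h.2)]
    have hsum : 0 ≤ ∑ i ∈ Finset.range j, rearr x ((2:ℝ)^(2*i+2))⁻¹ :=
      Finset.sum_nonneg fun i _ => rearr_nonneg x _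
    positivity

theorem Tf1_dominates_dual_hardy (x : ℝ → ℝ) (hx : Integrable x m01) :
    ∀ᵐ t ∂m01,
      (1/(2*Real.log 2)) * indicator Eset 1 t * dil (1/2) (hardyCstar (rearr x)) t
        ≤ Tmart (fun u => ∑' n : ℕ,
            (-1:ℝ)^(n+1) * rearr x (((2:ℝ)^(n+1))⁻¹) * haarH n u) t
          * indicator Eset 1 t := by
  change ∀ᵐ t ∂m01, _ ≤ Tmart (f1 x) t * _
  filter_upwards [ae_all_iff.2 fun m => condE_f1_ae_eq hx m] with t hcond
  by_cases hE : t ∈ Eset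
  · obtain ⟨j, htj⟩ := mem_iUnion.1 hE
    rw [indicator_of_mem hE, Pi.one_apply, mul_one, mul_one, Tmart_f1_eq hcond htj]
    have hlog : 0 < Real.log 2 := Real.log_pos one_lt_two
    calc 1 / (2 * Real.log 2) * dil (1/2) (hardyCstar (rearr x)) t
        ≤ 1 / (2 * Real.log 2) *
            (2 * Real.log 2 * ∑ i ∈ Finset.range j, rearr x ((2:ℝ)^(2*i+2))⁻¹) := by
          gcongr
          exact dil_hardyCstar_rearr_le hx htj
      _ = ∑ i ∈ Finset.range j, rearr x ((2:ℝ)^(2*i+2))⁻¹ := by field_simp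
  · simp [indicator_of_notMem hE]
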